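/- Let G be a connected chordal graph that is not complete and let C be a maximal clique of G. The following are equivalent: (i) there exists a maximal clique C' ≠ C with Sep(C) = C ∩ C' (i.e., C is a boundary clique); (ii) Sep(C) is a minimal vertex separator of G. -/

import Mathlib

namespace Chordal

variable {V : Type*} [Fintype V]

/-- A closed walk has a chord: an edge of `G` joining two support vertices that is
not an edge of the walk. -/
def HasChord (G : SimpleGraph V) {u : V} (c : G.Walk u u) : Prop :=
  ∃ v w, v ∈ c.support ∧ w ∈ c.support ∧ G.Adj v w ∧ s(v, w) ∉ c.edges

/-- A graph is chordal if every cycle of length at least 4 has a chord. -/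
def IsChordal (G : SimpleGraph V) : Prop :=
  ∀ ⦃u : V⦄ (c : G.Walk u u), c.IsCycle → 4 ≤ c.length → HasChord G c

/-- A maximal clique of `G`. -/
def IsMaxClique (G : SimpleGraph V) (s : Set V) : Prop :=
  G.IsClique s ∧ ∀ t : Set V, G.IsClique t → s ⊆ t → s = t

/-- A maximal clique of the induced subgraph `G(W)`. -/
def IsMaxCliqueOn (G : SimpleGraph V) (W s : Set V) : Prop :=
  s ⊆ W ∧ G.IsClique s ∧ ∀ t : Set V, t ⊆ W → G.IsClique t → s ⊆ t → s = t

/-- There is a walk from `u` to `w` staying inside `W` and avoiding `S`. -/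
def ReachWithin (G : SimpleGraph V) (W S : Set V) (u w : V) : Prop :=
  ∃ p : G.Walk u w, ∀ x ∈ p.support, x ∈ W ∧ x ∉ S

/-- `S` separates `u` from `w` in the induced subgraph `G(W)`. -/
def SeparatesOn (G : SimpleGraph V) (W S : Set V) (u w : V) : Prop :=
  u ∈ W ∧ w ∈ W ∧ u ∉ S ∧ w ∉ S ∧ u ≠ w ∧ ¬ ReachWithin G W S u w

/-- `S` is a minimal vertex separator of the induced subgraph `G(W)`:
for some pair `u, w` it is an inclusion-minimal set separating `u` from `w`. -/
def IsMinSeparatorOn (G : SimpleGraph V) (W S : Set V) : Prop :=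
  S ⊆ W ∧ ∃ u w, SeparatesOn G W S u w ∧ ∀ S' ⊂ S, ¬ SeparatesOn G W S' u w

/-- `S` is a minimal vertex separator of `G`. -/
def IsMinSeparator (G : SimpleGraph V) (S : Set V) : Prop :=
  IsMinSeparatorOn G Set.univ S

/-- `S` is inclusion-minimal among the minimal vertex separators of `G`. -/
def IsInclMinSeparator (G : SimpleGraph V) (S : Set V) : Prop :=
  IsMinSeparator G S ∧ ∀ S' : Set V, IsMinSeparator G S' → S' ⊆ S → S' = S

/-- `Γ` is a connected component of `G(V \ S)`. -/
def IsCompOutside (G : SimpleGraph V) (S Γ : Set V) : Prop :=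
  ∃ u, u ∉ S ∧ Γ = {w | ReachWithin G Set.univ S u w}

/-- A vertex is simplicial if its neighborhood is a clique. -/
def IsSimplicial (G : SimpleGraph V) (v : V) : Prop :=
  G.IsClique (G.neighborSet v)

/-- The simplicial component of a clique `C`: the simplicial vertices of `G` in `C`. -/
def Simp (G : SimpleGraph V) (C : Set V) : Set V :=
  {v ∈ C | IsSimplicial G v}

/-- The non-simplicial component of a clique `C`. -/
def Sep (G : SimpleGraph V) (C : Set V) : Set V :=
  C \ Simp G C

/-- `C` is a boundary clique (simply separated clique): a maximal clique such that
`Sep C = C ∩ C'` for some other maximal clique `C'`. -/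
def IsBoundaryClique (G : SimpleGraph V) (C : Set V) : Prop :=
  IsMaxClique G C ∧ ∃ C' : Set V, IsMaxClique G C' ∧ C' ≠ C ∧ Sep G C = C ∩ C'

/-- The induced subgraph on `W`, kept on the same vertex type. -/
def restrictS (G : SimpleGraph V) (W : Set V) : SimpleGraph V where
  Adj u v := G.Adj u v ∧ u ∈ W ∧ v ∈ W
  symm := ⟨fun u v ⟨h, hu, hv⟩ => ⟨h.symm, hv, hu⟩⟩
  loopless := ⟨fun u ⟨h, _, _⟩ => G.irrefl h⟩

/-- The vertex subset `A` induces a connected subgraph of `T`. -/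
def ConnOn {α : Type*} (T : SimpleGraph α) (A : Set α) : Prop :=
  A.Nonempty ∧ ∀ u ∈ A, ∀ v ∈ A, ∃ p : T.Walk u v, ∀ x ∈ p.support, x ∈ A

/-- The induced subgraph `G(W)` is complete. -/
def CompleteOn (G : SimpleGraph V) (W : Set V) : Prop :=
  ∀ u ∈ W, ∀ v ∈ W, u ≠ v → G.Adj u v

/-- A clique tree of `G`: a tree on the maximal cliques of `G` satisfying the
junction property. -/
def IsCliqueTree (G : SimpleGraph V) (T : SimpleGraph {s : Set V // IsMaxClique G s}) : Prop :=
  T.IsTree ∧ ∀ (C₁ C₂ : {s : Set V // IsMaxClique G s}) (p : T.Walk C₁ C₂), p.IsPath →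
    ∀ C₃ ∈ p.support, C₁.val ∩ C₂.val ⊆ C₃.val

/-- A leaf (endpoint) of a graph: a vertex with exactly one neighbor. -/
def IsLeaf {α : Type*} (T : SimpleGraph α) (a : α) : Prop :=
  ∃! b, T.Adj a b

/-- The union of the cliques preceding position `k` in a sequence. -/
def prefUnion {K : ℕ} (f : Fin K → Set V) (k : Fin K) : Set V :=
  {v | ∃ j, j < k ∧ v ∈ f j}

/-- A perfect sequence of the maximal cliques of the induced subgraph `G(W)`:
an enumeration of the maximal cliques of `G(W)` with the running intersection property. -/
def IsPerfectSeqOn (G : SimpleGraph V) (W : Set V) {K : ℕ} (f : Fin K → Set V) : Prop :=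
  Function.Injective f ∧ (∀ s : Set V, IsMaxCliqueOn G W s ↔ ∃ k, f k = s) ∧
  ∀ k : Fin K, 0 < (k : ℕ) →
    G.IsClique (prefUnion f k ∩ f k) ∧ ∃ k' : Fin K, k' < k ∧ prefUnion f k ∩ f k ⊆ f k'

/-- A perfect sequence of the maximal cliques of `G`. -/
def IsPerfectSeq (G : SimpleGraph V) {K : ℕ} (f : Fin K → Set V) : Prop :=
  Function.Injective f ∧ (∀ s : Set V, IsMaxClique G s ↔ ∃ k, f k = s) ∧
  ∀ k : Fin K, 0 < (k : ℕ) →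
    G.IsClique (prefUnion f k ∩ f k) ∧ ∃ k' : Fin K, k' < k ∧ prefUnion f k ∩ f k ⊆ f k'

/-- The closed neighborhood of a vertex. -/
def closedNbhd (G : SimpleGraph V) (v : V) : Set V :=
  insert v (G.neighborSet v)

end Chordal

/-!
(⇒) A walk from a simplicial vertex of `C` that avoids `Sep C` never leaves `Simp C`, so
`Sep C = C ∩ C'` separates `Simp C` from `C' \ C`; every vertex of `Sep C` lies in both cliques
and is thus adjacent to both sides, which makes the separator minimal.

(⇐) Each vertex of a minimal separator has a neighbour in both separated components, and one
of these components misses the clique `Simp C`. In a chordal graph a connected set that every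
vertex of a clique sees contains a vertex seeing the whole clique (Dirac); for `Sep C` this
vertex `x ∉ C` spans together with `Sep C` a clique, and any maximal clique `C'` containing it
meets `C` exactly in `Sep C`, since a simplicial vertex of `C` adjacent to `x` would force
`x ∈ C`.
-/

namespace SimpleGraph.Walk

variable {V : Type*} {G : SimpleGraph V} {u v w : V}

theorem end_mem_of_adj_closed {R T : Set V} (p : G.Walk u v) (hu : u ∈ R)
    (hp : ∀ x ∈ p.support, x ∈ T) (hR : ∀ y ∈ R, ∀ z ∈ T, G.Adj y z → z ∈ R) : v ∈ R := by
  induction p with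
  | nil => exact hu
  | cons h p ih =>
    exact ih (hR _ hu _ (hp _ (by simp)) h) fun x hx => hp x (by simp [hx])

theorem exists_forall_length_le (P : ∀ u v : V, G.Walk u v → Prop)
    (h : ∃ u v, ∃ p : G.Walk u v, P u v p) :
    ∃ u v, ∃ p : G.Walk u v, P u v p ∧
      ∀ u' v' (q : G.Walk u' v'), P u' v' q → p.length ≤ q.length := by
  classical
  have hex : ∃ n, ∃ u v, ∃ p : G.Walk u v, P u v p ∧ p.length = n :=
    let ⟨u, v, p, hp⟩ := h
    ⟨_, u, v, p, hp, rfl⟩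
  obtain ⟨u, v, p, hp, hlen⟩ := Nat.find_spec hex
  exact ⟨u, v, p, hp, fun u' v' q hq => hlen ▸ Nat.find_min' hex ⟨u', v', q, hq, rfl⟩⟩

theorem length_takeUntil_add_length_dropUntil [DecidableEq V] (p : G.Walk u v)
    (h : w ∈ p.support) : (p.takeUntil w h).length + (p.dropUntil w h).length = p.length := by
  rw [← length_append, take_spec]

section Shortest

variable {W : Set V} {p : G.Walk u v} (hp : ∀ x ∈ p.support, x ∈ W)
  (hmin : ∀ q : G.Walk u v, (∀ x ∈ q.support, x ∈ W) → p.length ≤ q.length)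
include hp hmin

theorem isPath_of_forall_length_le : p.IsPath := by
  classical
  have hbypass := hmin p.bypass fun x hx => hp x (p.support_bypass_subset_support hx)
  exact p.bypass_eq_self_of_length_le_length_bypass hbypass ▸ p.bypass_isPath

theorem length_takeUntil_le_succ_of_adj [DecidableEq V] {x y : V} (hx : x ∈ p.support)
    (hy : y ∈ p.support) (hxy : G.Adj x y) :
    (p.takeUntil y hy).length ≤ (p.takeUntil x hx).length + 1 := by
  have hshortcut := hmin ((p.takeUntil x hx).append (cons hxy (p.dropUntil y hy))) (by
    intro z hz
    rw [mem_support_append_iff, support_cons, List.mem_cons] at hz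
    rcases hz with hz | hz | hz
    · exact hp z (p.support_takeUntil_subset_support hx hz)
    · exact hz ▸ hp x hx
    · exact hp z (p.support_dropUntil_subset_support hy hz))
  have := p.length_takeUntil_add_length_dropUntil hy
  simp only [length_append, length_cons] at hshortcut
  omega

theorem isChordless_of_forall_length_le : p.IsChordless := by
  classical
  rw [isChordless_iff_forall_mem_edges]
  intro x y hx hy hxy
  have hji := length_takeUntil_le_succ_of_adj hp hmin hx hy hxy
  have hij := length_takeUntil_le_succ_of_adj hp hmin hy hx hxy.symm
  have hgx := p.getVert_length_takeUntil hx
  have hgy := p.getVert_length_takeUntil hy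
  have hlx := p.length_takeUntil_le_length hx
  have hly := p.length_takeUntil_le_length hy
  set i := (p.takeUntil x hx).length
  set j := (p.takeUntil y hy).length
  rw [mk_mem_edges_iff_exists]
  rcases (show j = i ∨ j = i + 1 ∨ i = j + 1 by omega) with h | h | h
  · exact absurd (hgx.symm.trans (h ▸ hgy)) hxy.ne
  · exact ⟨i, by omega, by rw [← h, hgx, hgy]⟩
  · exact ⟨j, by omega, by rw [← h, hgx, hgy, Sym2.eq_swap]⟩

end Shortest

theorem IsChordless.concat {p : G.Walk u v} (hp : p.IsChordless) (h : G.Adj v w)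
    (hw : ∀ x ∈ p.support, G.Adj x w → x = v) : (p.concat h).IsChordless := by
  rw [isChordless_iff_forall_mem_edges] at hp ⊢
  simp only [support_concat, edges_concat, List.concat_eq_append, List.mem_append,
    List.mem_singleton]
  rintro x y (hx | rfl) (hy | rfl) hxy
  · exact .inl (hp hx hy hxy)
  · exact .inr (by rw [hw x hx hxy])
  · exact .inr (by rw [hw y hy hxy.symm, Sym2.eq_swap])
  · exact absurd hxy (G.irrefl)

end SimpleGraph.Walk

namespace Chordal

open SimpleGraph Walk Set

variable {V : Type*} {G : SimpleGraph V} {W S : Set V} {u v w : V}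

theorem IsChordal.not_isChordless (hch : IsChordal G) {u : V} {c : G.Walk u u}
    (hc : c.IsCycle) (hlen : 4 ≤ c.length) : ¬ c.IsChordless := by
  obtain ⟨x, y, hx, hy, hxy, hne⟩ := hch c hc hlen
  exact fun h => hne (h.mem_edges hx hy hxy)

theorem IsChordal.exists_adj_interior (hch : IsChordal G) {v a t : V} {p : G.Walk v a}
    (hp : p.IsPath) (hpc : p.IsChordless) (hlen : 2 ≤ p.length) (ht : t ∉ p.support)
    (htv : G.Adj t v) (hta : G.Adj t a) : ∃ y ∈ p.support, y ≠ v ∧ y ≠ a ∧ G.Adj t y := by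
  by_contra! hno
  have hva : v ≠ a := by
    rintro rfl
    have := length_eq_zero_iff.mpr (isPath_iff_nil.mp hp)
    omega
  have hcycle : (cons htv (p.concat hta.symm)).IsCycle := by
    refine (cons_isCycle_iff _ _).mpr ⟨hp.concat ht _, ?_⟩
    rw [edges_concat, List.concat_eq_append, List.mem_append, List.mem_singleton, not_or]
    refine ⟨fun h => ht (p.fst_mem_support_of_mem_edges h), fun h => ?_⟩
    rcases Sym2.eq_iff.mp h with ⟨rfl, -⟩ | ⟨-, rfl⟩
    · exact ht p.end_mem_support
    · exact hva rfl
  refine hch.not_isChordless hcycle (by rw [length_cons, length_concat]; omega) ?_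
  rw [isChordless_iff_forall_mem_edges]
  have htedge : ∀ y ∈ p.support, G.Adj t y →
      s(t, y) ∈ (cons htv (p.concat hta.symm)).edges := by
    intro y hy hty
    simp only [edges_cons, edges_concat, List.concat_eq_append, List.mem_cons, List.mem_append,
      List.not_mem_nil, or_false]
    by_cases hyv : y = v
    · exact .inl (by rw [hyv])
    by_cases hya : y = a
    · exact .inr (.inr (by rw [hya, Sym2.eq_swap]))
    · exact absurd hty (hno y hy hyv hya)
  simp only [support_cons, support_concat, List.mem_cons, List.mem_append, List.not_mem_nil,
    or_false]
  rintro x y (rfl | hx | rfl) (rfl | hy | rfl) hxy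
  all_goals first
    | exact absurd hxy (G.irrefl)
    | exact htedge _ ‹_› hxy
    | (rw [Sym2.eq_swap]; exact htedge _ ‹_› hxy.symm)
    | simp [hpc.mem_edges hx hy hxy]

theorem IsChordal.adj_of_shortest_walk (hch : IsChordal G) {Γ : Set V} {a t x z : V}
    {q : G.Walk x z} (hq : ∀ y ∈ q.support, y ∈ Γ) (haz : G.Adj a z)
    (hqmin : ∀ z' (q' : G.Walk x z'), (∀ y ∈ q'.support, y ∈ Γ) → G.Adj a z' →
      q.length ≤ q'.length)
    (ha : a ∉ Γ) (ht : t ∉ Γ) (hat : G.Adj a t) (htx : G.Adj t x) : G.Adj t z := by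
  classical
  by_contra htz
  -- `r` extended by the edge `z a` is a chordless path that `t` sees only at its two ends.
  obtain ⟨v, z', r, ⟨hr, htv, rfl⟩, hrmin⟩ := exists_forall_length_le
    (fun v z' (r : G.Walk v z') => (∀ y ∈ r.support, y ∈ q.support) ∧ G.Adj t v ∧ z = z')
    ⟨x, z, q, fun _ hy => hy, htx, rfl⟩
  have hrmin' : ∀ r' : G.Walk v z, (∀ y ∈ r'.support, y ∈ q.support) → r.length ≤ r'.length :=
    fun r' hr' => hrmin v z r' ⟨hr', htv, rfl⟩
  have ht_only : ∀ y ∈ r.support, G.Adj t y → y = v := by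
    intro y hy hty
    by_contra hyv
    have := hrmin y z (r.dropUntil y hy)
      ⟨fun w hw => hr w (r.support_dropUntil_subset_support hy hw), hty, rfl⟩
    have := length_dropUntil_lt_length hy hyv
    omega
  have ha_only : ∀ y ∈ q.support, G.Adj y a → y = z := by
    intro y hy hya
    by_contra hyz
    have := hqmin y (q.takeUntil y hy)
      (fun w hw => hq w (q.support_takeUntil_subset_support hy hw)) hya.symm
    have := length_takeUntil_lt_length hy hyz
    omega
  have hrΓ : ∀ y ∈ r.support, y ∈ Γ := fun y hy => hq y (hr y hy)
  have hrlen : r.length ≠ 0 := fun h => htz (eq_of_length_eq_zero h ▸ htv)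
  obtain ⟨y, hy, hyv, hya, hty⟩ := hch.exists_adj_interior
    ((isPath_of_forall_length_le hr hrmin').concat (fun h => ha (hrΓ a h)) haz.symm)
    ((isChordless_of_forall_length_le hr hrmin').concat haz.symm
      fun y hy h => ha_only y (hr y hy) h)
    (by rw [length_concat]; omega)
    (by
      rw [support_concat, List.mem_append, List.mem_singleton, not_or]
      exact ⟨fun h => ht (hrΓ t h), hat.ne'⟩)
    htv hat.symm
  rw [support_concat, List.mem_append, List.mem_singleton] at hy
  exact hyv (ht_only y (hy.resolve_right hya) hty)

theorem IsChordal.exists_adj_forall (hch : IsChordal G) {Γ : Set V} (hΓ : ConnOn G Γ)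
    (hS : S.Finite) (hSc : G.IsClique S) (hSΓ : Disjoint S Γ)
    (hfull : ∀ s ∈ S, ∃ y ∈ Γ, G.Adj s y) : ∃ x ∈ Γ, ∀ s ∈ S, G.Adj x s := by
  induction S, hS using Set.Finite.induction_on with
  | empty => exact ⟨_, hΓ.1.some_mem, by simp⟩
  | @insert a F haF _ ih =>
    obtain ⟨x, hxΓ, hxF⟩ := ih (hSc.subset (subset_insert _ _))
      (hSΓ.mono_left (subset_insert _ _)) fun s hs => hfull s (mem_insert_of_mem _ hs)
    obtain ⟨y, hyΓ, hay⟩ := hfull a (mem_insert _ _)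
    obtain ⟨q, hq⟩ := hΓ.2 x hxΓ y hyΓ
    obtain ⟨x', z, q, ⟨rfl, hqΓ, haz⟩, hqmin⟩ := exists_forall_length_le
      (fun x' z (q : G.Walk x' z) => x = x' ∧ (∀ v ∈ q.support, v ∈ Γ) ∧ G.Adj a z)
      ⟨x, y, q, rfl, hq, hay⟩
    have hnotΓ : ∀ s ∈ insert a F, s ∉ Γ := fun s hs hsΓ => hSΓ.notMem_of_mem_left hs hsΓ
    refine ⟨z, hqΓ z q.end_mem_support, ?_⟩
    rintro s (rfl | hs)
    · exact haz.symm
    · refine (hch.adj_of_shortest_walk hqΓ haz (fun z' q' h₁ h₂ => hqmin _ z' q' ⟨rfl, h₁, h₂⟩)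
        (hnotΓ _ (mem_insert _ _)) (hnotΓ s (mem_insert_of_mem _ hs))
        (hSc (mem_insert _ _) (mem_insert_of_mem _ hs) ?_) (hxF s hs).symm).symm
      rintro rfl
      exact haF hs

theorem reachWithin_refl (hW : u ∈ W) (hS : u ∉ S) :
    ReachWithin G W S u u :=
  ⟨nil, fun x hx => by rw [mem_support_nil_iff.mp hx]; exact ⟨hW, hS⟩⟩

theorem ReachWithin.symm (h : ReachWithin G W S u w) :
    ReachWithin G W S w u :=
  let ⟨p, hp⟩ := h
  ⟨p.reverse, fun x hx => hp x (by simpa using hx)⟩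

theorem ReachWithin.trans (h₁ : ReachWithin G W S u v)
    (h₂ : ReachWithin G W S v w) : ReachWithin G W S u w := by
  obtain ⟨p, hp⟩ := h₁
  obtain ⟨q, hq⟩ := h₂
  exact ⟨p.append q, fun x hx => (mem_support_append_iff _ _).mp hx |>.elim (hp x) (hq x)⟩

theorem ReachWithin.of_adj (h : ReachWithin G W S u v)
    (hvw : G.Adj v w) (hW : w ∈ W) (hS : w ∉ S) : ReachWithin G W S u w := by
  refine h.trans ⟨hvw.toWalk, fun x hx => ?_⟩
  rcases List.mem_pair.mp (by simpa using hx) with rfl | rfl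
  · obtain ⟨p, hp⟩ := h
    exact hp x p.end_mem_support
  · exact ⟨hW, hS⟩

theorem reachWithin_of_mem_support (p : G.Walk u w)
    (hp : ∀ x ∈ p.support, x ∈ W ∧ x ∉ S) {x : V} (hx : x ∈ p.support) :
    ReachWithin G W S u x := by
  classical
  exact ⟨p.takeUntil x hx, fun y hy => hp y (p.support_takeUntil_subset_support hx hy)⟩

theorem connOn_setOf_reachWithin (hu : u ∉ S) :
    ConnOn G {z | ReachWithin G univ S u z} := by
  refine ⟨⟨u, reachWithin_refl (mem_univ _) hu⟩, ?_⟩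
  rintro z ⟨p, hp⟩ z' ⟨p', hp'⟩
  refine ⟨p.reverse.append p', fun y hy => ?_⟩
  rcases (mem_support_append_iff _ _).mp hy with hy | hy
  · exact reachWithin_of_mem_support p hp (by simpa using hy)
  · exact reachWithin_of_mem_support p' hp' hy

theorem disjoint_setOf_reachWithin :
    Disjoint S {z | ReachWithin G univ S u z} :=
  disjoint_left.mpr fun _ hz ⟨p, hp⟩ => (hp _ p.end_mem_support).2 hz

theorem SeparatesOn.symm (h : SeparatesOn G W S u w) :
    SeparatesOn G W S w u :=
  ⟨h.2.1, h.1, h.2.2.2.1, h.2.2.1, h.2.2.2.2.1.symm, fun hr => h.2.2.2.2.2 hr.symm⟩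

theorem exists_reachWithin_adj_of_minimal {s : V}
    (hsep : SeparatesOn G univ S u w) (hmin : ∀ S' ⊂ S, ¬ SeparatesOn G univ S' u w)
    (hs : s ∈ S) : ∃ y, ReachWithin G univ S u y ∧ G.Adj s y := by
  by_contra! hno
  refine hmin (S \ {s}) (sdiff_singleton_ssubset.mpr hs) ⟨mem_univ _, mem_univ _,
    fun h => hsep.2.2.1 h.1, fun h => hsep.2.2.2.1 h.1, hsep.2.2.2.2.1, ?_⟩
  rintro ⟨p, hp⟩
  refine hsep.2.2.2.2.2 (p.end_mem_of_adj_closed (R := {z | ReachWithin G univ S u z})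
    (reachWithin_refl (mem_univ _) hsep.2.2.1) (fun x hx => (hp x hx).2) ?_)
  intro y hy z hz hyz
  by_cases hzs : z = s
  · exact absurd hyz.symm (hzs ▸ hno y hy)
  · exact hy.of_adj hyz (mem_univ _) fun h => hz ⟨h, hzs⟩

theorem IsMaxClique.neighborSet_subset {C : Set V} (hC : IsMaxClique G C) {v : V}
    (hv : v ∈ Simp G C) : G.neighborSet v ⊆ C := by
  have hCv : C = insert v (G.neighborSet v) := by
    refine hC.2 _ (hv.2.insert fun _ hb _ => hb) fun x hx => ?_
    rcases eq_or_ne x v with rfl | hxv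
    · exact mem_insert _ _
    · exact mem_insert_of_mem _ (hC.1 hv.1 hx hxv.symm)
  exact hCv ▸ subset_insert _ _

theorem mem_simp_of_mem_of_notMem_sep {C : Set V} {v : V} (hv : v ∈ C) (hvS : v ∉ Sep G C) :
    v ∈ Simp G C := by
  by_contra h
  exact hvS ⟨hv, h⟩

theorem mem_simp_of_reachWithin {C : Set V} (hC : IsMaxClique G C) {y z : V}
    (hy : y ∈ Simp G C) (h : ReachWithin G univ (Sep G C) y z) : z ∈ Simp G C := by
  obtain ⟨p, hp⟩ := h
  refine p.end_mem_of_adj_closed hy (T := (Sep G C)ᶜ) (fun x hx => (hp x hx).2) ?_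
  exact fun x hx z hz hxz => mem_simp_of_mem_of_notMem_sep (hC.neighborSet_subset hx hxz) hz

theorem reachWithin_of_mem_simp {C : Set V} (hC : IsMaxClique G C) {y z : V}
    (hy : y ∈ Simp G C) (hz : z ∈ Simp G C) : ReachWithin G univ (Sep G C) y z := by
  have hyy : ReachWithin G univ (Sep G C) y y := reachWithin_refl (mem_univ _) fun h => h.2 hy
  rcases eq_or_ne y z with rfl | hyz
  · exact hyy
  · exact hyy.of_adj (hC.1 hy.1 hz.1 hyz) (mem_univ _) fun h => h.2 hz

theorem disjoint_simp_or_disjoint_simp {C : Set V} (hC : IsMaxClique G C)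
    (huw : ¬ ReachWithin G univ (Sep G C) u w) :
    Disjoint (Simp G C) {z | ReachWithin G univ (Sep G C) u z} ∨
      Disjoint (Simp G C) {z | ReachWithin G univ (Sep G C) w z} := by
  by_contra! h
  obtain ⟨y, hy, hyu⟩ := not_disjoint_iff.mp h.1
  obtain ⟨z, hz, hzw⟩ := not_disjoint_iff.mp h.2
  exact huw ((hyu.trans (reachWithin_of_mem_simp hC hy hz)).trans hzw.symm)

theorem exists_isMaxClique_superset [Finite V] {s : Set V} (hs : G.IsClique s) :
    ∃ C, IsMaxClique G C ∧ s ⊆ C := by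
  obtain ⟨C, hsC, hmax⟩ := (toFinite {t : Set V | G.IsClique t}).exists_le_maximal hs
  exact ⟨C, ⟨hmax.prop, fun t ht hCt => hmax.eq_of_le ht hCt⟩, hsC⟩

theorem exists_isMaxClique_inter_eq_sep_of_adj [Finite V] {C : Set V} (hC : IsMaxClique G C)
    {x : V} (hxC : x ∉ C) (hx : ∀ s ∈ Sep G C, G.Adj x s) :
    ∃ C', IsMaxClique G C' ∧ C' ≠ C ∧ Sep G C = C ∩ C' := by
  obtain ⟨C', hC', hsub⟩ := exists_isMaxClique_superset
    ((hC.1.subset sdiff_subset).insert fun s hs _ => hx s hs)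
  have hxC' : x ∈ C' := hsub (mem_insert _ _)
  refine ⟨C', hC', fun h => hxC (h ▸ hxC'), subset_antisymm
    (fun s hs => ⟨hs.1, hsub (mem_insert_of_mem _ hs)⟩) ?_⟩
  rintro y ⟨hyC, hyC'⟩
  by_contra hyS
  have hyx : y ≠ x := fun h => hxC (h ▸ hyC)
  exact hxC (hC.neighborSet_subset (mem_simp_of_mem_of_notMem_sep hyC hyS)
    (hC'.1 hyC' hxC' hyx))

theorem isMinSeparator_sep_of_inter_eq {C C' : Set V} (hC : IsMaxClique G C)
    (hC' : IsMaxClique G C') (hne : C' ≠ C) (hsep : Sep G C = C ∩ C') :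
    IsMinSeparator G (Sep G C) := by
  obtain ⟨u, hu⟩ : (Simp G C).Nonempty := by
    by_contra! h
    refine hne (hC.2 C' hC'.1 fun y hy => ?_).symm
    have : y ∈ Sep G C := ⟨hy, by simp [h]⟩
    exact (hsep ▸ this).2
  obtain ⟨w, hwC', hwC⟩ : (C' \ C).Nonempty :=
    sdiff_nonempty.mpr fun h => hne (hC'.2 C hC.1 h)
  refine ⟨subset_univ _, u, w, ⟨mem_univ _, mem_univ _, fun h => h.2 hu, fun h => hwC h.1,
    fun h => hwC (h ▸ hu.1), fun h => hwC (mem_simp_of_reachWithin hC hu h).1⟩, ?_⟩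
  intro S' hS' hsepS'
  obtain ⟨x, hxS, hxS'⟩ := exists_of_ssubset hS'
  have hux : G.Adj u x := hC.1 hu.1 hxS.1 fun h => hxS.2 (h ▸ hu)
  have hxw : G.Adj x w := hC'.1 (hsep ▸ hxS).2 hwC' fun h => hwC (h ▸ hxS.1)
  exact hsepS'.2.2.2.2.2 <| ((reachWithin_refl (mem_univ _) hsepS'.2.2.1).of_adj hux
    (mem_univ _) hxS').of_adj hxw (mem_univ _) hsepS'.2.2.2.1

theorem IsChordal.exists_isMaxClique_inter_eq_sep [Finite V] (hch : IsChordal G) {C : Set V}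
    (hC : IsMaxClique G C) (hsep : SeparatesOn G univ (Sep G C) u w)
    (hmin : ∀ S' ⊂ Sep G C, ¬ SeparatesOn G univ S' u w)
    (hsimp : Disjoint (Simp G C) {z | ReachWithin G univ (Sep G C) u z}) :
    ∃ C', IsMaxClique G C' ∧ C' ≠ C ∧ Sep G C = C ∩ C' := by
  obtain ⟨x, hxΓ, hx⟩ := hch.exists_adj_forall (connOn_setOf_reachWithin hsep.2.2.1)
    (toFinite _) (hC.1.subset sdiff_subset) disjoint_setOf_reachWithin
    fun s hs => exists_reachWithin_adj_of_minimal hsep hmin hs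
  refine exists_isMaxClique_inter_eq_sep_of_adj hC (fun hxC => ?_) hx
  by_cases hxS : x ∈ Sep G C
  · exact disjoint_setOf_reachWithin.notMem_of_mem_left hxS hxΓ
  · exact hsimp.notMem_of_mem_left (mem_simp_of_mem_of_notMem_sep hxC hxS) hxΓ

theorem boundary_iff_sep_isMinSeparator_general {V : Type*} [Fintype V]
    (G : SimpleGraph V) (hch : IsChordal G) (C : Set V) (hC : IsMaxClique G C) :
    (∃ C' : Set V, IsMaxClique G C' ∧ C' ≠ C ∧ Sep G C = C ∩ C') ↔
      IsMinSeparator G (Sep G C) := by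
  refine ⟨fun ⟨C', hC', hne, hsep⟩ => isMinSeparator_sep_of_inter_eq hC hC' hne hsep, ?_⟩
  rintro ⟨-, u, w, hsep, hmin⟩
  rcases disjoint_simp_or_disjoint_simp hC hsep.2.2.2.2.2 with h | h
  · exact hch.exists_isMaxClique_inter_eq_sep hC hsep hmin h
  · exact hch.exists_isMaxClique_inter_eq_sep hC hsep.symm
      (fun S' hS' h' => hmin S' hS' h'.symm) h

theorem boundary_iff_sep_isMinSeparator {V : Type*} [Fintype V]
    (G : SimpleGraph V) (hconn : G.Connected) (hch : IsChordal G)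
    (hnc : ¬ CompleteOn G Set.univ) (C : Set V) (hC : IsMaxClique G C) :
    (∃ C' : Set V, IsMaxClique G C' ∧ C' ≠ C ∧ Sep G C = C ∩ C') ↔
      IsMinSeparator G (Sep G C) :=
  boundary_iff_sep_isMinSeparator_general G hch C hC

end Chordal
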